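/- Let a ≡ 3 (mod 4), m = 5a+2, x = (m−5)/4, and suppose n = 4(qm + r) + i for integers q ≥ 0, 0 ≤ r ≤ 5a+1, and 0 ≤ i ≤ 3, where r lies in one of the intervals [((4t+i+1)m − (5i+1))/20, ((4t+3+i)m + 1 − 5i)/20] for some 0 ≤ t ≤ 4. Then |n·x|_m ≥ (m−1)/4, and hence κ({a, a+1, 2a+1, 3a+1, n}) ≥ (5a+1)/(4(5a+2)) provided n ∉ {a, a+1, 2a+1, 3a+1}. -/
import Mathlib


/-- `absMod y m` is the distance from `y` to the nearest multiple of `m`. -/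
def absMod (y m : ℕ) : ℕ := min (y % m) (m - y % m)

/-- `S` is an `M`-set: no two (distinct) elements of `S` differ by an element of `M`. -/
def isMSet (M S : Set ℕ) : Prop := ∀ x ∈ S, ∀ y ∈ S, x ≠ y → x - y ∉ M

/-- The Cantor--Gordon parameter κ(M). -/
noncomputable def kappa (M : Set ℕ) : ℝ :=
  sSup {q : ℝ | ∃ c m : ℕ, 0 < m ∧ Nat.Coprime c m ∧
    q = sInf {r : ℝ | ∃ k ∈ M, r = (absMod (c * k) m : ℝ)} / m}

/-- Upper asymptotic density of a set of nonnegative integers. -/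
noncomputable def upperDensity (S : Set ℕ) : ℝ :=
  Filter.limsup (fun x : ℕ => ((S ∩ Set.Iic x).ncard : ℝ) / x) Filter.atTop

/-- Motzkin's maximal density μ(M) over all M-sets. -/
noncomputable def mu (M : Set ℕ) : ℝ :=
  sSup {d : ℝ | ∃ S : Set ℕ, isMSet M S ∧ d = upperDensity S}

lemma absMod_lb {L y k v m : ℕ} (h : y = k * m + v) (hvm : v < m)
    (h1 : L ≤ v) (h2 : L + v ≤ m) : L ≤ absMod y m := by
  subst h
  have hmm : (k * m + v) % m = v := by
    rw [Nat.add_comm (k*m) v, Nat.add_mul_mod_self_right, Nat.mod_eq_of_lt hvm]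
  unfold absMod
  rw [hmm]
  omega

lemma absMod_le (y m : ℕ) (h : 0 < m) : absMod y m ≤ m := by
  unfold absMod
  have := Nat.mod_lt y h
  omega

lemma kappa_ge (M : Set ℕ) (c m : ℕ) (hm : 0 < m) (hco : Nat.Coprime c m)
    (a0 : ℕ) (ha0 : a0 ∈ M) (v : ℝ)
    (hlow : ∀ k ∈ M, v ≤ (absMod (c * k) m : ℝ)) :
    v / m ≤ kappa M := by
  have hmR : (0:ℝ) < m := by exact_mod_cast hm
  unfold kappa
  have hmem : sInf {r : ℝ | ∃ k ∈ M, r = (absMod (c * k) m : ℝ)} / m ∈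
      {q : ℝ | ∃ c m : ℕ, 0 < m ∧ Nat.Coprime c m ∧
        q = sInf {r : ℝ | ∃ k ∈ M, r = (absMod (c * k) m : ℝ)} / m} := by
    exact ⟨c, m, hm, hco, rfl⟩
  have hbdd : BddAbove {q : ℝ | ∃ c m : ℕ, 0 < m ∧ Nat.Coprime c m ∧
      q = sInf {r : ℝ | ∃ k ∈ M, r = (absMod (c * k) m : ℝ)} / m} := by
    refine ⟨1, ?_⟩
    rintro qq ⟨c', m', hm', -, rfl⟩
    have hm'R : (0:ℝ) < m' := by exact_mod_cast hm'
    have hbb : BddBelow {r : ℝ | ∃ k ∈ M, r = (absMod (c' * k) m' : ℝ)} := by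
      refine ⟨0, ?_⟩
      rintro rr ⟨k, hk, rfl⟩
      positivity
    have hne : (absMod (c' * a0) m' : ℝ) ∈
        {r : ℝ | ∃ k ∈ M, r = (absMod (c' * k) m' : ℝ)} := ⟨a0, ha0, rfl⟩
    have h1 := csInf_le hbb hne
    have h2 : (absMod (c' * a0) m' : ℝ) ≤ m' := by
      exact_mod_cast absMod_le (c' * a0) m' hm'
    rw [div_le_one hm'R]
    exact h1.trans h2
  have hge : v ≤ sInf {r : ℝ | ∃ k ∈ M, r = (absMod (c * k) m : ℝ)} := by
    have hne : ((absMod (c * a0) m : ℕ) : ℝ) ∈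
        {r : ℝ | ∃ k ∈ M, r = (absMod (c * k) m : ℝ)} := by
      exact ⟨a0, ha0, rfl⟩
    apply le_csInf ⟨_, hne⟩
    rintro rr ⟨k, hk, rfl⟩
    exact hlow k hk
  calc v / m ≤ sInf {r : ℝ | ∃ k ∈ M, r = (absMod (c * k) m : ℝ)} / m := by
        gcongr
    _ ≤ _ := le_csSup hbdd hmem

theorem stmt14 (a q r i t n m x : ℕ) (ha : 3 ≤ a) (ha4 : a % 4 = 3)
    (hm : m = 5*a+2) (hx : x = (m-5)/4)
    (hr : r ≤ 5*a+1) (hi : i ≤ 3) (ht : t ≤ 4)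
    (hn : n = 4*(q*m+r)+i)
    (hr1 : ((4*t+i+1)*m - (5*i+1) : ℤ) ≤ 20*(r : ℤ))
    (hr2 : (20*(r : ℤ) : ℤ) ≤ (4*t+3+i)*m + 1 - 5*i) :
    (m-1)/4 ≤ absMod (n*x) m ∧
    (n ∉ ({a, a+1, 2*a+1, 3*a+1} : Set ℕ) →
      kappa {a, a+1, 2*a+1, 3*a+1, n} ≥ ((5*a+1 : ℕ) : ℝ) / (4*(5*a+2))) := by
  obtain ⟨b, hb⟩ : ∃ b, a = 4*b+3 := ⟨a/4, by omega⟩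
  subst hb
  have hm17 : m = 20*b+17 := by omega
  have hx5 : x = 5*b+3 := by omega
  -- main computation: absMod (n*x) m ≥ 5b+4
  have key : 5*b+4 ≤ absMod (n*x) m := by
    have hb1 : 20*r + m ≤ 4*((t+1)*m + i*x) + 1 ∧
        4*((t+1)*m + i*x) ≤ 3*m+1+20*r := by
      interval_cases t <;> interval_cases i <;> omega
    have hid : n*x + 5*r = i*x + (4*(q*x) + r)*m := by
      subst hn
      rw [hm17, hx5]
      ring
    set z := (t+1)*m + i*x with hz
    have h5 : 5*r ≤ z := by omega
    set y := z - 5*r with hy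
    have hmodeq : (n*x) % m = y := by
      have e1 : (n*x + 5*r) % m = (i*x) % m := by
        rw [hid]; exact Nat.add_mul_mod_self_right _ _ _
      have e2 : (y + 5*r) % m = (i*x) % m := by
        have hzy : y + 5*r = (t+1)*m + i*x := by omega
        rw [hzy, Nat.add_comm ((t+1)*m) (i*x)]
        exact Nat.add_mul_mod_self_right _ _ _
      have e3 : n*x ≡ y [MOD m] :=
        Nat.ModEq.add_right_cancel' (5*r) (e1.trans e2.symm)
      have hylt : y < m := by omega
      rw [Nat.ModEq] at e3
      rw [e3, Nat.mod_eq_of_lt hylt]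
    unfold absMod
    rw [hmodeq]
    omega
  constructor
  · exact le_trans (by omega) key
  · intro _
    have hco : Nat.Coprime x m := by
      rw [hx5, hm17]
      have hbez : (5*b+3)*(48*b+40) = (20*b+17)*(12*b+7) + 1 := by ring
      have hd1 := (Nat.gcd_dvd_left (5*b+3) (20*b+17)).mul_right (48*b+40)
      have hd2 := (Nat.gcd_dvd_right (5*b+3) (20*b+17)).mul_right (12*b+7)
      have h3 : Nat.gcd (5*b+3) (20*b+17) ∣ 1 := by
        have hsub : (5*b+3)*(48*b+40) - (20*b+17)*(12*b+7) = 1 := by omega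
        have := Nat.dvd_sub hd1 hd2
        rwa [hsub] at this
      exact Nat.eq_one_of_dvd_one h3
    have hlow : ∀ k ∈ ({4*b+3, 4*b+3+1, 2*(4*b+3)+1, 3*(4*b+3)+1, n} : Set ℕ),
        ((5*b+4 : ℕ) : ℝ) ≤ (absMod (x * k) m : ℝ) := by
      intro k hk
      have hnat : 5*b+4 ≤ absMod (x * k) m := by
        simp only [Set.mem_insert_iff, Set.mem_singleton_iff] at hk
        rcases hk with rfl | rfl | rfl | rfl | rfl
        · exact absMod_lb (show x*(4*b+3) = b*m + (10*b+9) by rw [hx5, hm17]; ring)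
            (by omega) (by omega) (by omega)
        · exact absMod_lb (show x*(4*b+3+1) = b*m + (15*b+12) by rw [hx5, hm17]; ring)
            (by omega) (by omega) (by omega)
        · exact absMod_lb (show x*(2*(4*b+3)+1) = (2*b+1)*m + (5*b+4) by rw [hx5, hm17]; ring)
            (by omega) (by omega) (by omega)
        · exact absMod_lb (show x*(3*(4*b+3)+1) = (3*b+1)*m + (15*b+13) by rw [hx5, hm17]; ring)
            (by omega) (by omega) (by omega)
        · rw [show x*k = k*x from mul_comm _ _]; exact key
      exact_mod_cast hnat
    have hk := kappa_ge {4*b+3, 4*b+3+1, 2*(4*b+3)+1, 3*(4*b+3)+1, n} x m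
      (by omega) hco (4*b+3) (Set.mem_insert _ _) ((5*b+4 : ℕ) : ℝ) hlow
    rw [ge_iff_le]
    refine le_trans (le_of_eq ?_) hk
    rw [hm17]
    push_cast
    rw [div_eq_div_iff (by positivity) (by positivity)]
    ring
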